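/- (Lemma 2.1(5)) Assume conditions A1–A5 hold for (S̄, η̄). Then I₁ = I(S̄): a set X ⊆ ω₁ admits a maximal ladder if and only if X is S̄-small. -/

import Mathlib

open Set

/-- ω₁, the first uncountable ordinal. -/
noncomputable def omegaOne : Ordinal := (Cardinal.aleph 1).ord

/-- ω₂, the second uncountable ordinal. -/
noncomputable def omegaTwo : Ordinal := (Cardinal.aleph 2).ord

/-- The set of countable ordinals, i.e. ω₁ viewed as a set of ordinals. -/
def omegaOneSet : Set Ordinal := {o | o < omegaOne}

/-- `A ⊆* B` iff `A \ B` is finite. -/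
def AlmostSubset (A B : Set Ordinal) : Prop := (A \ B).Finite

/-- `A =* B` iff `A ⊆* B` and `B ⊆* A`. -/
def AlmostEq (A B : Set Ordinal) : Prop := AlmostSubset A B ∧ AlmostSubset B A

/-- A club subset of ω₁: a set of countable ordinals, unbounded in ω₁ and
closed (every nonzero δ < ω₁ which is a limit of members is a member). -/
def IsClubOmegaOne (C : Set Ordinal) : Prop :=
  C ⊆ omegaOneSet ∧
  (∀ a < omegaOne, ∃ b ∈ C, a < b) ∧
  (∀ δ, δ ≠ 0 → δ < omegaOne → (∀ a < δ, ∃ b ∈ C, a < b ∧ b < δ) → δ ∈ C)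

/-- A stationary subset of ω₁: one meeting every club. -/
def Stationary (S : Set Ordinal) : Prop := ∀ C, IsClubOmegaOne C → (S ∩ C).Nonempty

/-- A ladder system: for each δ in the domain (a set of countable limit ordinals),
a strictly increasing ω-sequence cofinal in δ. -/
structure Ladder where
  dom : Set Ordinal
  toFun : Ordinal → ℕ → Ordinal
  dom_lt : ∀ δ ∈ dom, δ < omegaOne
  mono : ∀ δ ∈ dom, StrictMono (toFun δ)
  lt : ∀ δ ∈ dom, ∀ n, toFun δ n < δ
  cofinal : ∀ δ ∈ dom, ∀ a < δ, ∃ n, a < toFun δ n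

/-- `[η_δ]`, the range of the ladder at δ. -/
def Ladder.lad (η : Ladder) (δ : Ordinal) : Set Ordinal := Set.range (η.toFun δ)

/-- The restriction `η̄↾A`, with domain `dom(η̄) ∩ A`. -/
def Ladder.restrict (η : Ladder) (A : Set Ordinal) : Ladder where
  dom := η.dom ∩ A
  toFun := η.toFun
  dom_lt := fun δ h => η.dom_lt δ h.1
  mono := fun δ h => η.mono δ h.1
  lt := fun δ h => η.lt δ h.1
  cofinal := fun δ h => η.cofinal δ h.1

/-- η̄ is club-guessing iff every club C has some δ ∈ dom(η̄) with `[η_δ] ⊆* C`. -/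
def ClubGuessing (η : Ladder) : Prop :=
  ∀ C, IsClubOmegaOne C → ∃ δ ∈ η.dom, AlmostSubset (η.lad δ) C

/-- η̄ is strongly club-guessing iff for every club C there is a club D with
`[η_δ] ⊆* C` for all δ ∈ D ∩ dom(η̄). -/
def StronglyGuessing (η : Ladder) : Prop :=
  ∀ C, IsClubOmegaOne C → ∃ D, IsClubOmegaOne D ∧ ∀ δ ∈ D ∩ η.dom, AlmostSubset (η.lad δ) C

/-- A club C avoids η̄ iff `[η_δ] ∩ C` is finite for every δ ∈ dom(η̄) outside
some non-stationary set. -/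
def Avoids (C : Set Ordinal) (η : Ladder) : Prop :=
  IsClubOmegaOne C ∧ ∃ N : Set Ordinal, ¬ Stationary N ∧
    ∀ δ ∈ η.dom, δ ∉ N → (η.lad δ ∩ C).Finite

/-- η̄ is avoidable iff some club avoids it. -/
def Avoidable (η : Ladder) : Prop := ∃ C, Avoids C η

/-- A set S ⊆ ω₁ is avoidable iff every ladder system over S is avoidable. -/
def AvoidableSet (S : Set Ordinal) : Prop := ∀ η : Ladder, η.dom ⊆ S → Avoidable η

/-- Two ladders are almost disjoint iff for some club C, `[η_δ] ∩ [μ_δ]` is finite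
for every δ ∈ C ∩ dom(η̄) ∩ dom(μ̄). -/
def AlmostDisjoint (η μ : Ladder) : Prop :=
  ∃ C, IsClubOmegaOne C ∧ ∀ δ ∈ C ∩ (η.dom ∩ μ.dom), (η.lad δ ∩ μ.lad δ).Finite

/-- `η̄ ⊴ μ̄` : η̄ is a subladder of μ̄. -/
def Subladder (η μ : Ladder) : Prop :=
  ∃ C, IsClubOmegaOne C ∧ C ∩ η.dom ⊆ μ.dom ∧
    ∀ δ ∈ C ∩ η.dom, AlmostSubset (η.lad δ) (μ.lad δ)

/-- η̄ is maximal for X iff dom(η̄) ⊆ X, η̄ is strongly club-guessing, and every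
ladder system over X almost disjoint from η̄ is avoidable. -/
def MaximalLadderFor (η : Ladder) (X : Set Ordinal) : Prop :=
  η.dom ⊆ X ∧ StronglyGuessing η ∧
    ∀ μ : Ladder, μ.dom ⊆ X → AlmostDisjoint μ η → Avoidable μ

/-- The diagonal union `∇_ξ A_ξ = {α < ω₁ : ∃ ξ < α, α ∈ A_ξ}`. -/
def diagUnion (A : Ordinal → Set Ordinal) : Set Ordinal :=
  {α | α < omegaOne ∧ ∃ ξ < α, α ∈ A ξ}

/-- H is S̄-small iff the set of i < ω₂ with H ∩ S_i stationary has size ≤ ℵ₁. -/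
def SSmall (S : Ordinal → Set Ordinal) (H : Set Ordinal) : Prop :=
  Cardinal.mk {i : Ordinal // i < omegaTwo ∧ Stationary (H ∩ S i)} ≤
    Cardinal.lift.{1,0} (Cardinal.aleph 1 : Cardinal.{0})

/-- Conditions A1–A5 for (S̄, η̄), with χ the family of maximal ladders from A3. -/
def CondA (S : Ordinal → Set Ordinal) (η : Ladder) (χ : Ordinal → Ladder) : Prop :=
  (∀ i < omegaTwo, S i ⊆ omegaOneSet ∧ Stationary (S i)) ∧
  (∀ i < omegaTwo, ∀ j < omegaTwo, i ≠ j → ¬ Stationary (S i ∩ S j)) ∧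
  -- A1
  (∀ i < omegaTwo, S i ⊆ η.dom) ∧
  -- A2
  (∀ μ : Ladder, AlmostDisjoint μ η → Avoidable μ) ∧
  -- A3
  (∀ i < omegaTwo, (χ i).dom = S i ∧ MaximalLadderFor (χ i) (S i)) ∧
  -- A4
  (∀ X : Set Ordinal, X ⊆ omegaOneSet →
      (∀ i < omegaTwo, ¬ Stationary (X ∩ S i)) → AvoidableSet X) ∧
  -- A5
  (∀ X : Set Ordinal, X ⊆ omegaOneSet → ¬ SSmall S X →
      ∀ ρ : Ladder, ρ.dom = X → Subladder ρ η →
        ∃ i, i < omegaTwo ∧ S i ⊆ X ∧ Subladder (χ i) ρ)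

section Basics

lemma omegaOne_isLimit : Order.IsSuccLimit omegaOne :=
  Cardinal.isSuccLimit_ord (Cardinal.aleph0_le_aleph 1)

lemma omegaOne_pos : 0 < omegaOne := omegaOne_isLimit.pos

lemma succ_lt_omegaOne {a : Ordinal} (h : a < omegaOne) : a + 1 < omegaOne := by
  rw [Ordinal.add_one_eq_succ]; exact omegaOne_isLimit.succ_lt h

lemma iSup_nat_lt_omegaOne (c : ℕ → Ordinal) (h : ∀ n, c n < omegaOne) :
    (⨆ n, c n) < omegaOne := by
  apply Cardinal.iSup_lt_ord_lift_of_isRegular Cardinal.isRegular_aleph_one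
  · simpa using Cardinal.aleph0_lt_aleph_one
  · exact h

lemma mem_omegaOneSet {a : Ordinal} : a ∈ omegaOneSet ↔ a < omegaOne := Iff.rfl

lemma isClub_omegaOneSet : IsClubOmegaOne omegaOneSet := by
  refine ⟨fun x hx => hx, fun a ha => ⟨a + 1, succ_lt_omegaOne ha, ?_⟩, fun δ _ hδ _ => hδ⟩
  have : a < a + 1 := by
    simpa using (Ordinal.add_lt_add_iff_left a).mpr Ordinal.zero_lt_one
  exact this

end Basics

section Clubs

lemma isClub_iInter_nat (F : ℕ → Set Ordinal) (hF : ∀ n, IsClubOmegaOne (F n)) :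
    IsClubOmegaOne (⋂ n, F n) := by
  classical
  refine ⟨fun x hx => (hF 0).1 (Set.mem_iInter.mp hx 0), ?_, ?_⟩
  · intro a ha
    have step : ∀ k : ℕ, ∀ x : Ordinal, x < omegaOne → ∃ b ∈ F k, x < b :=
      fun k x hx => (hF k).2.1 x hx
    set f : ℕ → Ordinal → Ordinal := fun k x =>
      if h : x < omegaOne then Classical.choose (step k x h) else 0 with hfdef
    have hf : ∀ k x, x < omegaOne → f k x ∈ F k ∧ x < f k x := by
      intro k x hx
      simp only [hfdef, dif_pos hx]
      exact ⟨(Classical.choose_spec (step k x hx)).1, (Classical.choose_spec (step k x hx)).2⟩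
    set c : ℕ → Ordinal := fun n => Nat.rec a (fun m x => f m.unpair.1 x) n with hcdef
    have hcs : ∀ n, c (n + 1) = f n.unpair.1 (c n) := fun n => rfl
    have hinv : ∀ n, c n < omegaOne := by
      intro n
      induction n with
      | zero => exact ha
      | succ m ih =>
        rw [hcs m]
        exact (hF m.unpair.1).1 (hf m.unpair.1 (c m) ih).1
    have hmono : StrictMono c := by
      apply strictMono_nat_of_lt_succ
      intro n
      rw [hcs n]
      exact (hf n.unpair.1 (c n) (hinv n)).2
    have hmemF : ∀ n, c (n + 1) ∈ F n.unpair.1 := by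
      intro n; rw [hcs n]; exact (hf n.unpair.1 (c n) (hinv n)).1
    set δ : Ordinal := ⨆ n, c n with hδdef
    have hδlt : δ < omegaOne := iSup_nat_lt_omegaOne c hinv
    have hle : ∀ n, c n ≤ δ := fun n => le_ciSup (Ordinal.bddAbove_range c) n
    have hltδ : ∀ n, c n < δ := fun n => lt_of_lt_of_le (hmono (Nat.lt_succ_self n)) (hle (n + 1))
    have hex : ∀ a' < δ, ∃ n, a' < c n := by
      intro a' ha'
      by_contra hcon
      push_neg at hcon
      exact absurd (ciSup_le hcon) (not_le.mpr ha')
    refine ⟨δ, ?_, hltδ 0⟩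
    apply Set.mem_iInter.mpr
    intro k
    apply (hF k).2.2 δ (pos_iff_ne_zero.mp (lt_of_le_of_lt (zero_le (a := c 0)) (hltδ 0))) hδlt
    intro a' ha'
    obtain ⟨n, hn⟩ := hex a' ha'
    refine ⟨c (Nat.pair k n + 1), ?_, ?_, hltδ (Nat.pair k n + 1)⟩
    · have := hmemF (Nat.pair k n)
      rwa [Nat.unpair_pair] at this
    · exact lt_of_lt_of_le hn (hmono.monotone ((Nat.right_le_pair k n).trans (Nat.le_succ _)))
  · intro δ hne hδ h
    apply Set.mem_iInter.mpr
    intro k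
    apply (hF k).2.2 δ hne hδ
    intro a' ha'
    obtain ⟨b, hb, h1, h2⟩ := h a' ha'
    exact ⟨b, Set.mem_iInter.mp hb k, h1, h2⟩

lemma IsClubOmegaOne.inter {C D : Set Ordinal} (hC : IsClubOmegaOne C) (hD : IsClubOmegaOne D) : IsClubOmegaOne (C ∩ D) := by
  have := isClub_iInter_nat (fun n => if n = 0 then C else D) (by
    intro n; by_cases h : n = 0 <;> simp [h, hC, hD])
  convert this using 1
  ext x
  simp only [Set.mem_inter_iff, Set.mem_iInter]
  constructor
  · intro ⟨h1, h2⟩ n; by_cases h : n = 0 <;> simp [h, h1, h2]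
  · intro h; have h0 := h 0; have h1 := h 1; simp at h0 h1; exact ⟨h0, h1⟩

lemma isClub_Ioi {ξ : Ordinal} (hξ : ξ < omegaOne) :
    IsClubOmegaOne {b | ξ < b ∧ b < omegaOne} := by
  refine ⟨fun x hx => hx.2, ?_, ?_⟩
  · intro a ha
    refine ⟨max a ξ + 1, ⟨?_, succ_lt_omegaOne (max_lt ha hξ)⟩, ?_⟩
    · calc ξ ≤ max a ξ := le_max_right a ξ
        _ < max a ξ + 1 := by simpa using (Ordinal.add_lt_add_iff_left (max a ξ)).mpr Ordinal.zero_lt_one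
    · calc a ≤ max a ξ := le_max_left a ξ
        _ < max a ξ + 1 := by simpa using (Ordinal.add_lt_add_iff_left (max a ξ)).mpr Ordinal.zero_lt_one
  · intro δ hne hδ h
    obtain ⟨b, hb, _, h2⟩ := h ξ (by
      by_contra hcon
      push_neg at hcon
      obtain ⟨b, hb, h1, h2⟩ := h 0 (pos_iff_ne_zero.mpr hne)
      exact absurd (lt_of_lt_of_le hb.1 (le_trans h2.le hcon)) (lt_irrefl _) )
    exact ⟨lt_trans hb.1 h2, hδ⟩

lemma countable_Iio_omegaOne {b : Ordinal} (hb : b < omegaOne) :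
    Countable (Set.Iio b) := by
  rw [← Cardinal.mk_le_aleph0_iff, Ordinal.mk_Iio_ordinal]
  have h1 : b.card < Cardinal.aleph 1 := Cardinal.lt_ord.mp hb
  have haleph : (Cardinal.aleph 1) = Order.succ (Cardinal.aleph0) := by
    rw [← Cardinal.aleph_zero, ← Cardinal.aleph_succ, Ordinal.succ_zero]
  have h2 : b.card ≤ Cardinal.aleph0 := by
    rw [haleph, Order.lt_succ_iff] at h1; exact h1
  calc Cardinal.lift b.card ≤ Cardinal.lift Cardinal.aleph0 :=
        Cardinal.lift_le.mpr h2
    _ = Cardinal.aleph0 := Cardinal.lift_aleph0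

lemma isClub_iInter_lt {b : Ordinal} (hb : b < omegaOne) (F : Ordinal → Set Ordinal)
    (hF : ∀ ξ < b, IsClubOmegaOne (F ξ)) :
    IsClubOmegaOne (omegaOneSet ∩ {δ | ∀ ξ < b, δ ∈ F ξ}) := by
  by_cases hb0 : b = 0
  · have : (omegaOneSet ∩ {δ | ∀ ξ < b, δ ∈ F ξ}) = omegaOneSet := by
      ext x
      simp [hb0, not_lt_zero]
    rw [this]; exact isClub_omegaOneSet
  · have : Nonempty (Set.Iio b) := ⟨⟨0, pos_iff_ne_zero.mpr hb0⟩⟩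
    have := countable_Iio_omegaOne hb
    obtain ⟨s, hs⟩ := exists_surjective_nat (Set.Iio b)
    have hclub := isClub_iInter_nat (fun n => F (s n).val)
      (fun n => hF (s n).val (s n).2)
    have heq : (omegaOneSet ∩ {δ | ∀ ξ < b, δ ∈ F ξ}) = ⋂ n, F (s n).val := by
      ext x
      simp only [Set.mem_inter_iff, Set.mem_setOf_eq, Set.mem_iInter]
      constructor
      · intro ⟨_, h2⟩ n; exact h2 (s n).val (s n).2
      · intro h
        refine ⟨(hF (s 0).val (s 0).2).1 (h 0), ?_⟩
        intro ξ hξ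
        obtain ⟨n, hn⟩ := hs ⟨ξ, hξ⟩
        have := h n
        rwa [hn] at this
    rw [heq]; exact hclub

lemma not_stationary_iff {T : Set Ordinal} :
    ¬ Stationary T ↔ ∃ C, IsClubOmegaOne C ∧ T ∩ C = ∅ := by
  unfold Stationary
  push_neg
  simp [Set.not_nonempty_iff_eq_empty]

lemma Stationary.mono {T T' : Set Ordinal} (h : T ⊆ T') (hT : Stationary T) :
    Stationary T' := fun C hC => by
  obtain ⟨x, hx1, hx2⟩ := hT C hC
  exact ⟨x, h hx1, hx2⟩

lemma not_stationary_mono {T T' : Set Ordinal} (h : T ⊆ T') (hT : ¬ Stationary T') :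
    ¬ Stationary T := fun hs => hT (hs.mono h)

lemma Stationary.inter_club {T C : Set Ordinal} (hT : Stationary T) (hC : IsClubOmegaOne C) :
    Stationary (T ∩ C) := by
  intro C' hC'
  obtain ⟨x, hx1, hx2⟩ := hT (C ∩ C') (hC.inter hC')
  exact ⟨x, ⟨hx1, hx2.1⟩, hx2.2⟩

lemma not_stationary_bounded {T : Set Ordinal} {ξ : Ordinal} (hξ : ξ < omegaOne)
    (h : ∀ δ ∈ T, δ ≤ ξ) : ¬ Stationary T := by
  rw [not_stationary_iff]
  refine ⟨_, isClub_Ioi hξ, ?_⟩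
  ext x
  simp only [Set.mem_inter_iff, Set.mem_setOf_eq, Set.mem_empty_iff_false, iff_false]
  rintro ⟨hx1, hx2, _⟩
  exact absurd (h x hx1) (not_le.mpr hx2)

lemma not_stationary_iUnion_lt {b : Ordinal} (hb : b < omegaOne)
    (N : Ordinal → Set Ordinal) (hN : ∀ ξ < b, ¬ Stationary (N ξ)) :
    ¬ Stationary {δ | ∃ ξ < b, δ ∈ N ξ} := by
  classical
  have hE : ∀ ξ, ∃ C, IsClubOmegaOne C ∧ (ξ < b → N ξ ∩ C = ∅) := by
    intro ξ
    by_cases h : ξ < b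
    · obtain ⟨C, hC, hCe⟩ := not_stationary_iff.mp (hN ξ h)
      exact ⟨C, hC, fun _ => hCe⟩
    · exact ⟨omegaOneSet, isClub_omegaOneSet, fun h' => absurd h' h⟩
  choose E hEclub hEe using hE
  rw [not_stationary_iff]
  refine ⟨omegaOneSet ∩ {δ | ∀ ξ < b, δ ∈ E ξ}, isClub_iInter_lt hb E (fun ξ _ => hEclub ξ), ?_⟩
  ext x
  simp only [Set.mem_inter_iff, Set.mem_setOf_eq, Set.mem_empty_iff_false, iff_false]
  rintro ⟨⟨ξ, hξ, hxN⟩, _, hx2⟩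
  have : x ∈ N ξ ∩ E ξ := ⟨hxN, hx2 ξ hξ⟩
  rw [hEe ξ hξ] at this
  exact this

lemma isClub_diagInter (F : Ordinal → Set Ordinal) (hF : ∀ ξ < omegaOne, IsClubOmegaOne (F ξ)) :
    IsClubOmegaOne {δ | δ ∈ omegaOneSet ∧ 0 < δ ∧ ∀ ξ < δ, δ ∈ F ξ} := by
  classical
  refine ⟨fun x hx => hx.1, ?_, ?_⟩
  · intro a ha
    have hcb : ∀ x, x < omegaOne → IsClubOmegaOne (omegaOneSet ∩ {δ | ∀ ξ < x, δ ∈ F ξ}) :=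
      fun x hx => isClub_iInter_lt hx F (fun ξ hξ => hF ξ (lt_trans hξ hx))
    set g : Ordinal → Ordinal := fun x =>
      if h : x < omegaOne then Classical.choose ((hcb x h).2.1 x h) else 0 with hgdef
    have hg : ∀ x, x < omegaOne →
        (g x ∈ omegaOneSet ∩ {δ | ∀ ξ < x, δ ∈ F ξ}) ∧ x < g x := by
      intro x hx
      simp only [hgdef, dif_pos hx]
      exact ⟨(Classical.choose_spec ((hcb x hx).2.1 x hx)).1,
        (Classical.choose_spec ((hcb x hx).2.1 x hx)).2⟩
    set c : ℕ → Ordinal := fun n => Nat.rec (a + 1) (fun _ x => g x) n with hcdef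
    have hcs : ∀ n, c (n + 1) = g (c n) := fun n => rfl
    have hinv : ∀ n, c n < omegaOne := by
      intro n
      induction n with
      | zero => exact succ_lt_omegaOne ha
      | succ m ih => rw [hcs m]; exact (hg (c m) ih).1.1
    have hmono : StrictMono c := by
      apply strictMono_nat_of_lt_succ
      intro n
      rw [hcs n]
      exact (hg (c n) (hinv n)).2
    have hmem : ∀ n, ∀ ξ < c n, c (n + 1) ∈ F ξ := by
      intro n ξ hξ
      rw [hcs n]
      exact (hg (c n) (hinv n)).1.2 ξ hξ
    set δ : Ordinal := ⨆ n, c n with hδdef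
    have hδlt : δ < omegaOne := iSup_nat_lt_omegaOne c hinv
    have hle : ∀ n, c n ≤ δ := fun n => le_ciSup (Ordinal.bddAbove_range c) n
    have hltδ : ∀ n, c n < δ := fun n => lt_of_lt_of_le (hmono (Nat.lt_succ_self n)) (hle (n + 1))
    have hex : ∀ a' < δ, ∃ n, a' < c n := by
      intro a' ha'
      by_contra hcon
      push_neg at hcon
      exact absurd (ciSup_le hcon) (not_le.mpr ha')
    have hδpos : 0 < δ := lt_of_le_of_lt (zero_le (a := c 0)) (hltδ 0)
    refine ⟨δ, ⟨hδlt, hδpos, ?_⟩, ?_⟩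
    · intro ξ hξ
      obtain ⟨n, hn⟩ := hex ξ hξ
      apply (hF ξ (lt_trans hξ hδlt)).2.2 δ (pos_iff_ne_zero.mp hδpos) hδlt
      intro a' ha'
      obtain ⟨m, hm⟩ := hex a' ha'
      refine ⟨c (max m n + 1), ?_, ?_, hltδ (max m n + 1)⟩
      · exact hmem (max m n) ξ (lt_of_lt_of_le hn (hmono.monotone (le_max_right m n)))
      · exact lt_of_lt_of_le hm (le_of_lt (hmono (Nat.lt_succ_of_le (le_max_left m n))))
    · calc a < a + 1 := by
            simpa using (Ordinal.add_lt_add_iff_left a).mpr Ordinal.zero_lt_one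
        _ ≤ δ := hle 0
  · intro δ hne hδ h
    refine ⟨hδ, pos_iff_ne_zero.mpr hne, ?_⟩
    intro ξ hξ
    apply (hF ξ (lt_trans hξ hδ)).2.2 δ hne hδ
    intro a' ha'
    obtain ⟨b, hb, h1, h2⟩ := h (max a' ξ) (max_lt ha' hξ)
    exact ⟨b, hb.2.2 ξ (lt_of_le_of_lt (le_max_right a' ξ) h1), lt_of_le_of_lt (le_max_left a' ξ) h1, h2⟩

section Ladders

lemma Ladder.lad_infinite (L : Ladder) {δ : Ordinal} (h : δ ∈ L.dom) : (L.lad δ).Infinite :=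
  Set.infinite_range_of_injective (L.mono δ h).injective

lemma Ladder.lad_bounded_finite (L : Ladder) {δ ξ : Ordinal} (h : δ ∈ L.dom) (hξ : ξ < δ) :
    {α | α ∈ L.lad δ ∧ α ≤ ξ}.Finite := by
  obtain ⟨n₀, hn₀⟩ := L.cofinal δ h ξ hξ
  apply Set.Finite.subset ((Set.finite_Iio n₀).image (L.toFun δ))
  rintro α ⟨⟨m, rfl⟩, hle⟩
  refine ⟨m, ?_, rfl⟩
  by_contra hcon
  have : L.toFun δ n₀ ≤ L.toFun δ m := (L.mono δ h).monotone (not_lt.mp hcon)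
  exact absurd (lt_of_le_of_lt (this.trans hle) hn₀) (lt_irrefl _)

noncomputable def emptyLadder : Ladder where
  dom := ∅
  toFun := fun _ n => n
  dom_lt := fun δ h => absurd h (Set.notMem_empty δ)
  mono := fun δ h => absurd h (Set.notMem_empty δ)
  lt := fun δ h => absurd h (Set.notMem_empty δ)
  cofinal := fun δ h => absurd h (Set.notMem_empty δ)

noncomputable def Ladder.even (L : Ladder) : Ladder where
  dom := L.dom
  toFun := fun δ n => L.toFun δ (2 * n)
  dom_lt := L.dom_lt
  mono := fun δ h => (L.mono δ h).comp (fun a b hab => by omega)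
  lt := fun δ h n => L.lt δ h _
  cofinal := fun δ h a ha => by
    obtain ⟨n, hn⟩ := L.cofinal δ h a ha
    exact ⟨n, lt_of_lt_of_le hn ((L.mono δ h).monotone (by omega))⟩

noncomputable def Ladder.odd (L : Ladder) : Ladder where
  dom := L.dom
  toFun := fun δ n => L.toFun δ (2 * n + 1)
  dom_lt := L.dom_lt
  mono := fun δ h => (L.mono δ h).comp (fun a b hab => by omega)
  lt := fun δ h n => L.lt δ h _
  cofinal := fun δ h a ha => by
    obtain ⟨n, hn⟩ := L.cofinal δ h a ha
    exact ⟨n, lt_of_lt_of_le hn ((L.mono δ h).monotone (by omega))⟩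

lemma Ladder.even_lad_subset (L : Ladder) (δ : Ordinal) : L.even.lad δ ⊆ L.lad δ := by
  rintro α ⟨n, rfl⟩; exact ⟨2 * n, rfl⟩

lemma Ladder.odd_lad_subset (L : Ladder) (δ : Ordinal) : L.odd.lad δ ⊆ L.lad δ := by
  rintro α ⟨n, rfl⟩; exact ⟨2 * n + 1, rfl⟩

lemma Ladder.even_odd_disjoint (L : Ladder) {δ : Ordinal} (h : δ ∈ L.dom) :
    L.even.lad δ ∩ L.odd.lad δ = ∅ := by
  ext α
  simp only [Set.mem_inter_iff, Set.mem_empty_iff_false, iff_false]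
  rintro ⟨⟨n, rfl⟩, ⟨m, hm⟩⟩
  have := (L.mono δ h).injective hm
  omega

lemma exists_ladder_sub (D : Set Ordinal) (L : Ladder) (A : Ordinal → Set Ordinal)
    (hdom : ∀ δ ∈ D, δ ∈ L.dom)
    (hA : ∀ δ ∈ D, (A δ).Infinite ∧ A δ ⊆ L.lad δ) :
    ∃ ν : Ladder, ν.dom = D ∧ ∀ δ ∈ D, ν.lad δ ⊆ A δ := by
  classical
  set p : Ordinal → ℕ → Prop := fun δ m => L.toFun δ m ∈ A δ with hpdef
  have hinf : ∀ δ ∈ D, (setOf (p δ)).Infinite := by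
    intro δ hδ
    by_contra hfin
    rw [Set.not_infinite] at hfin
    have hsub : A δ ⊆ L.toFun δ '' (setOf (p δ)) := by
      intro α hα
      obtain ⟨m, rfl⟩ := (hA δ hδ).2 hα
      exact ⟨m, hα, rfl⟩
    exact (hA δ hδ).1 ((hfin.image _).subset hsub)
  refine ⟨⟨D, fun δ n => if h : δ ∈ D then L.toFun δ (Nat.nth (p δ) n) else n,
    fun δ h => L.dom_lt δ (hdom δ h), ?_, ?_, ?_⟩, rfl, ?_⟩
  · intro δ h
    simp only [dif_pos h]
    exact (L.mono δ (hdom δ h)).comp (Nat.nth_strictMono (hinf δ h))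
  · intro δ h n
    simp only [dif_pos h]
    exact L.lt δ (hdom δ h) _
  · intro δ h a ha
    obtain ⟨n, hn⟩ := L.cofinal δ (hdom δ h) a ha
    refine ⟨n, ?_⟩
    simp only [dif_pos h]
    exact lt_of_lt_of_le hn ((L.mono δ (hdom δ h)).monotone
      ((Nat.nth_strictMono (hinf δ h)).le_apply))
  · intro δ h
    rintro α ⟨n, rfl⟩
    simp only [Ladder.lad, dif_pos h]
    exact Nat.nth_mem_of_infinite (hinf δ h) n

lemma sg_almost {ν L : Ladder} (hL : StronglyGuessing L) (hdom : ν.dom ⊆ L.dom)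
    (hsub : ∀ δ ∈ ν.dom, (ν.lad δ \ L.lad δ).Finite) : StronglyGuessing ν := by
  intro C hC
  obtain ⟨D, hD, h⟩ := hL C hC
  refine ⟨D, hD, fun δ hδ => ?_⟩
  have h1 : (L.lad δ \ C).Finite := h δ ⟨hδ.1, hdom hδ.2⟩
  apply Set.Finite.subset ((hsub δ hδ.2).union h1)
  intro α hα
  by_cases hmem : α ∈ L.lad δ
  · exact Or.inr ⟨hmem, hα.2⟩
  · exact Or.inl ⟨hα.1, hmem⟩

lemma not_avoidable_of_sg {L : Ladder} (hsg : StronglyGuessing L) (hstat : Stationary L.dom) :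
    ¬ Avoidable L := by
  rintro ⟨C, hC, N, hN, hav⟩
  obtain ⟨D, hD, hg⟩ := hsg C hC
  obtain ⟨E, hE, hNE⟩ := not_stationary_iff.mp hN
  obtain ⟨δ, hδdom, hδDE⟩ := hstat (D ∩ E) (hD.inter hE)
  have h1 : AlmostSubset (L.lad δ) C := hg δ ⟨hδDE.1, hδdom⟩
  have h2 : (L.lad δ ∩ C).Finite := by
    apply hav δ hδdom
    intro hmem
    have : δ ∈ N ∩ E := ⟨hmem, hδDE.2⟩
    rw [hNE] at this
    exact this
  have hcover : L.lad δ ⊆ (L.lad δ \ C) ∪ (L.lad δ ∩ C) := by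
    intro α hα
    by_cases h : α ∈ C
    · exact Or.inr ⟨hα, h⟩
    · exact Or.inl ⟨hα, h⟩
  exact (L.lad_infinite hδdom) ((h1.union h2).subset hcover)

end Ladders

lemma almostSubset_of_subset {A B : Set Ordinal} (h : A ⊆ B) : AlmostSubset A B := by
  unfold AlmostSubset
  rw [Set.diff_eq_empty.mpr h]
  exact Set.finite_empty

lemma forward_dir (S : Ordinal → Set Ordinal) (η : Ladder) (χ : Ordinal → Ladder)
    (hA : CondA S η χ) (X : Set Ordinal) (hX : X ⊆ omegaOneSet)
    (μ : Ladder) (hμ : MaximalLadderFor μ X) : SSmall S X := by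
  classical
  by_contra hsmall
  obtain ⟨hS, hSd, hA1, hA2, hA3, hA4, hA5⟩ := hA
  obtain ⟨hμX, hμsg, hμmax⟩ := hμ
  -- Step (a)
  have stepA : ∀ i, i < omegaTwo → Stationary (X ∩ S i) →
      ¬ Stationary {δ | (δ ∈ S i ∧ δ ∈ X) ∧
        (δ ∉ μ.dom ∨ ((χ i).lad δ \ μ.lad δ).Infinite)} := by
    intro i hi _ hUstat
    set U := {δ | (δ ∈ S i ∧ δ ∈ X) ∧
        (δ ∉ μ.dom ∨ ((χ i).lad δ \ μ.lad δ).Infinite)} with hUdef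
    set A : Ordinal → Set Ordinal := fun δ =>
      if δ ∈ μ.dom then (χ i).lad δ \ μ.lad δ else (χ i).lad δ with hAdef
    have hdomU : ∀ δ ∈ U, δ ∈ (χ i).dom := by
      intro δ hδ
      rw [(hA3 i hi).1]
      exact hδ.1.1
    have hApr : ∀ δ ∈ U, (A δ).Infinite ∧ A δ ⊆ (χ i).lad δ := by
      intro δ hδ
      by_cases h : δ ∈ μ.dom
      · have hinf : ((χ i).lad δ \ μ.lad δ).Infinite := by
          rcases hδ.2 with h' | h'
          · exact absurd h h'
          · exact h'
        simp only [hAdef, if_pos h]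
        exact ⟨hinf, Set.diff_subset⟩
      · simp only [hAdef, if_neg h]
        exact ⟨(χ i).lad_infinite (hdomU δ hδ), subset_rfl⟩
    obtain ⟨ν, hνdom, hνsub⟩ := exists_ladder_sub U (χ i) A hdomU hApr
    have hνad : AlmostDisjoint ν μ := by
      refine ⟨omegaOneSet, isClub_omegaOneSet, fun δ hδ => ?_⟩
      apply Set.Finite.subset Set.finite_empty
      rintro α ⟨hα1, hα2⟩
      have hδU : δ ∈ U := by rw [← hνdom]; exact hδ.2.1
      have := hνsub δ hδU hα1
      rw [hAdef] at this
      simp only [if_pos hδ.2.2] at this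
      exact this.2 hα2
    have hνav : Avoidable ν := hμmax ν (by rw [hνdom]; exact fun δ hδ => hδ.1.2) hνad
    have hνsg : StronglyGuessing ν := by
      apply sg_almost (hA3 i hi).2.2.1
      · rw [hνdom]; exact hdomU
      · intro δ hδ
        apply almostSubset_of_subset
        intro α hα
        have hδU : δ ∈ U := by rw [← hνdom]; exact hδ
        have := hνsub δ hδU hα
        exact (hApr δ hδU).2 this
    exact not_avoidable_of_sg hνsg (by rw [hνdom]; exact hUstat) hνav
  -- choose clubs E i
  have hEex : ∀ i, ∃ E, IsClubOmegaOne E ∧ (i < omegaTwo → Stationary (X ∩ S i) →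
      ∀ δ ∈ E, δ ∈ S i → δ ∈ X → δ ∈ μ.dom ∧ ((χ i).lad δ \ μ.lad δ).Finite) := by
    intro i
    by_cases hi : i < omegaTwo ∧ Stationary (X ∩ S i)
    · obtain ⟨E, hE, hEe⟩ := not_stationary_iff.mp (stepA i hi.1 hi.2)
      refine ⟨E, hE, fun _ _ δ hδE hδS hδX => ?_⟩
      have hnot : δ ∉ {δ | (δ ∈ S i ∧ δ ∈ X) ∧
          (δ ∉ μ.dom ∨ ((χ i).lad δ \ μ.lad δ).Infinite)} := by
        intro hmem
        have : δ ∈ {δ | (δ ∈ S i ∧ δ ∈ X) ∧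
            (δ ∉ μ.dom ∨ ((χ i).lad δ \ μ.lad δ).Infinite)} ∩ E := ⟨hmem, hδE⟩
        rw [hEe] at this
        exact this
      simp only [Set.mem_setOf_eq, not_and, not_or, Set.not_infinite] at hnot
      have := hnot ⟨hδS, hδX⟩
      exact ⟨not_not.mp this.1, this.2⟩
    · exact ⟨omegaOneSet, isClub_omegaOneSet, fun h1 h2 => absurd ⟨h1, h2⟩ hi⟩
  choose E hEclub hEprop using hEex
  -- Step (b)
  have stepB : ∀ i, i < omegaTwo → Stationary (X ∩ S i) →
      Stationary {δ | (δ ∈ S i ∧ δ ∈ X ∧ δ ∈ E i) ∧ ((χ i).lad δ ∩ η.lad δ).Infinite} := by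
    intro i hi hstat
    by_contra hcon
    obtain ⟨G, hG, hGe⟩ := not_stationary_iff.mp hcon
    set κ := (χ i).restrict (X ∩ E i) with hκdef
    have hκad : AlmostDisjoint κ η := by
      refine ⟨G, hG, fun δ hδ => ?_⟩
      rw [Set.not_infinite.symm]
      intro hinf
      have hδdom : δ ∈ (χ i).dom ∩ (X ∩ E i) := hδ.2.1
      have hδS : δ ∈ S i := by rw [← (hA3 i hi).1]; exact hδdom.1
      have : δ ∈ {δ | (δ ∈ S i ∧ δ ∈ X ∧ δ ∈ E i) ∧
          ((χ i).lad δ ∩ η.lad δ).Infinite} ∩ G :=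
        ⟨⟨⟨hδS, hδdom.2.1, hδdom.2.2⟩, hinf⟩, hδ.1⟩
      rw [hGe] at this
      exact this
    have hκav : Avoidable κ := hA2 κ hκad
    have hκsg : StronglyGuessing κ := by
      apply sg_almost (hA3 i hi).2.2.1
      · exact fun δ hδ => hδ.1
      · intro δ _
        exact almostSubset_of_subset subset_rfl
    apply not_avoidable_of_sg hκsg ?_ hκav
    have : Stationary ((X ∩ S i) ∩ E i) := hstat.inter_club (hEclub i)
    apply this.mono
    rintro δ ⟨⟨hδX, hδS⟩, hδE⟩
    refine ⟨?_, hδX, hδE⟩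
    rw [(hA3 i hi).1]
    exact hδS
  -- Step (c): the set Y
  set Y := {δ | ∃ i, (i < omegaTwo ∧ Stationary (X ∩ S i)) ∧
      ((δ ∈ S i ∧ δ ∈ X ∧ δ ∈ E i) ∧ ((χ i).lad δ ∩ η.lad δ).Infinite)} with hYdef
  have hYsmall : ¬ SSmall S Y := by
    intro hsm
    apply hsmall
    unfold SSmall at hsm ⊢
    refine le_trans (Cardinal.mk_subtype_mono ?_) hsm
    intro i hi
    refine ⟨hi.1, ?_⟩
    apply (stepB i hi.1 hi.2).mono
    intro δ hδ
    exact ⟨⟨i, hi, hδ⟩, hδ.1.1⟩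
  have hYΩ : Y ⊆ omegaOneSet := by
    rintro δ ⟨i, hi, hδ⟩
    exact hX hδ.1.2.1
  -- choice of indices
  have hIex : ∀ δ, ∃ i, δ ∈ Y → ((i < omegaTwo ∧ Stationary (X ∩ S i)) ∧
      ((δ ∈ S i ∧ δ ∈ X ∧ δ ∈ E i) ∧ ((χ i).lad δ ∩ η.lad δ).Infinite)) := by
    intro δ
    by_cases h : δ ∈ Y
    · obtain ⟨i, hi⟩ := h
      exact ⟨i, fun _ => hi⟩
    · exact ⟨0, fun hc => absurd hc h⟩
  choose I hI using hIex
  set B : Ordinal → Set Ordinal := fun δ => (χ (I δ)).lad δ ∩ η.lad δ with hBdef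
  have hYsubη : ∀ δ ∈ Y, δ ∈ η.dom := by
    intro δ hδ
    exact hA1 (I δ) (hI δ hδ).1.1 (hI δ hδ).2.1.1
  have hB : ∀ δ ∈ Y, (B δ).Infinite ∧ B δ ⊆ η.lad δ :=
    fun δ hδ => ⟨(hI δ hδ).2.2, Set.inter_subset_right⟩
  obtain ⟨ν, hνdom, hνsub⟩ := exists_ladder_sub Y η B hYsubη hB
  have hevdom : ν.even.dom = Y := hνdom
  have hodddom : ν.odd.dom = Y := hνdom
  -- Step (e): apply A5
  have hsub0 : Subladder ν.even η := by
    refine ⟨omegaOneSet, isClub_omegaOneSet, ?_, ?_⟩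
    · intro δ hδ
      apply hYsubη
      rw [← hevdom]
      exact hδ.2
    · intro δ hδ
      apply almostSubset_of_subset
      have hδY : δ ∈ Y := by rw [← hevdom]; exact hδ.2
      exact fun α hα => (hB δ hδY).2 (hνsub δ hδY (ν.even_lad_subset δ hα))
  obtain ⟨istar, histar, hsubY, hsubl⟩ := hA5 Y hYΩ hYsmall ν.even hevdom hsub0
  obtain ⟨Cstar, hCstar, hdomsub, hguess⟩ := hsubl
  -- Step (f): the ladder lam
  set lam := ν.odd.restrict (S istar) with hlamdef
  have hlamdom : lam.dom = Y ∩ S istar := by rw [hlamdef]; unfold Ladder.restrict; simp [hodddom]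
  have hlamstat : Stationary lam.dom := by
    rw [hlamdom]
    apply ((hS istar histar).2).mono
    intro δ hδ
    exact ⟨hsubY hδ, hδ⟩
  have hlamad : AlmostDisjoint lam (χ istar) := by
    refine ⟨Cstar, hCstar, fun δ hδ => ?_⟩
    have hδY : δ ∈ Y := by
      have := hδ.2.1
      rw [hlamdom] at this
      exact this.1
    have hfin : ((χ istar).lad δ \ ν.even.lad δ).Finite := by
      apply hguess
      refine ⟨hδ.1, ?_⟩
      rw [(hA3 istar histar).1]
      have := hδ.2.1
      rw [hlamdom] at this
      exact this.2
    apply hfin.subset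
    rintro α ⟨hα1, hα2⟩
    refine ⟨hα2, fun hα3 => ?_⟩
    have hdisj := ν.even_odd_disjoint (δ := δ) (by rw [hνdom]; exact hδY)
    have : α ∈ ν.even.lad δ ∩ ν.odd.lad δ := ⟨hα3, hα1⟩
    rw [hdisj] at this
    exact this
  have hlamav : Avoidable lam := by
    apply (hA3 istar histar).2.2.2 lam ?_ hlamad
    rw [hlamdom]
    exact Set.inter_subset_right
  have hlamsg : StronglyGuessing lam := by
    apply sg_almost hμsg
    · intro δ hδ
      rw [hlamdom] at hδ
      have hδY := hδ.1
      have hh := hI δ hδY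
      exact (hEprop (I δ) hh.1.1 hh.1.2 δ hh.2.1.2.2 hh.2.1.1 hh.2.1.2.1).1
    · intro δ hδ
      rw [hlamdom] at hδ
      have hδY := hδ.1
      have hh := hI δ hδY
      have h1 : ((χ (I δ)).lad δ \ μ.lad δ).Finite :=
        (hEprop (I δ) hh.1.1 hh.1.2 δ hh.2.1.2.2 hh.2.1.1 hh.2.1.2.1).2
      apply h1.subset
      rintro α ⟨hα1, hα2⟩
      refine ⟨?_, hα2⟩
      have : α ∈ B δ := hνsub δ hδY (ν.odd_lad_subset δ hα1)
      exact this.1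
  exact not_avoidable_of_sg hlamsg hlamstat hlamav

universe uu in
lemma backward_dir (S : Ordinal.{0} → Set Ordinal.{0}) (η : Ladder)
    (χ : Ordinal.{0} → Ladder)
    (hA : CondA S η χ) (X : Set Ordinal.{0}) (hX : X ⊆ omegaOneSet)
    (hsm : SSmall S X) : ∃ μ : Ladder, MaximalLadderFor μ X := by
  classical
  obtain ⟨hS, hSd, hA1, hA2, hA3, hA4, hA5⟩ := hA
  by_cases hW : ∃ i, i < omegaTwo ∧ Stationary (X ∩ S i)
  case neg =>
    push_neg at hW
    refine ⟨emptyLadder, fun δ h => absurd h (Set.notMem_empty δ), ?_, ?_⟩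
    · intro C hC
      exact ⟨C, hC, fun δ hδ => absurd hδ.2 (Set.notMem_empty δ)⟩
    · intro ρ hρ _
      exact hA4 X hX hW ρ hρ
  case pos =>
    obtain ⟨i₀, hi₀⟩ := hW
    -- enumerate the relevant indices by countable ordinals
    have hmk : Cardinal.mk (Set.Iio (omegaOne : Ordinal.{0})) =
        Cardinal.lift.{1} (Cardinal.aleph 1 : Cardinal.{0}) := by
      rw [Ordinal.mk_Iio_ordinal]
      unfold omegaOne
      rw [Cardinal.card_ord]
    have hle2 : Cardinal.lift.{1}
          (Cardinal.mk {i : Ordinal.{0} // i < omegaTwo ∧ Stationary (X ∩ S i)}) ≤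
        Cardinal.lift.{1} (Cardinal.mk (Set.Iio (omegaOne : Ordinal.{0}))) := by
      rw [hmk]
      calc Cardinal.lift.{1}
            (Cardinal.mk {i : Ordinal.{0} // i < omegaTwo ∧ Stationary (X ∩ S i)})
          ≤ Cardinal.lift.{1} (Cardinal.lift.{1,0} (Cardinal.aleph 1 : Cardinal.{0})) :=
            Cardinal.lift_le.mpr hsm
        _ = Cardinal.lift.{1} (Cardinal.lift.{1} (Cardinal.aleph 1 : Cardinal.{0})) := by
            simp [Cardinal.lift_aleph, Ordinal.lift_one]
    obtain ⟨emb⟩ := Cardinal.lift_mk_le'.mp hle2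
    set gg : Ordinal → Ordinal := fun ξ =>
      if h : ∃ w : {i : Ordinal // i < omegaTwo ∧ Stationary (X ∩ S i)}, (emb w).val = ξ
      then (Classical.choose h).val else i₀ with hggdef
    have hgg1 : ∀ ξ, gg ξ < omegaTwo ∧ Stationary (X ∩ S (gg ξ)) := by
      intro ξ
      rw [hggdef]
      by_cases h : ∃ w : {i : Ordinal // i < omegaTwo ∧ Stationary (X ∩ S i)}, (emb w).val = ξ
      · simp only [dif_pos h]
        exact (Classical.choose h).2
      · simp only [dif_neg h]
        exact hi₀
    have hgg2 : ∀ i, i < omegaTwo → Stationary (X ∩ S i) → ∃ ξ, ξ < omegaOne ∧ gg ξ = i := by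
      intro i hi hstat
      set w : {i : Ordinal // i < omegaTwo ∧ Stationary (X ∩ S i)} := ⟨i, hi, hstat⟩ with hwdef
      refine ⟨(emb w).val, (emb w).2, ?_⟩
      have hex : ∃ w' : {i : Ordinal // i < omegaTwo ∧ Stationary (X ∩ S i)},
          (emb w').val = (emb w).val := ⟨w, rfl⟩
      rw [hggdef]
      simp only [dif_pos hex]
      have hspec := Classical.choose_spec hex
      have : Classical.choose hex = w := emb.injective (Subtype.ext hspec)
      rw [this]
    -- the domain and the least-index function
    set domSet : Set Ordinal := {δ | δ < omegaOne ∧ δ ∈ X ∧ ∃ ξ, ξ < δ ∧ δ ∈ S (gg ξ)}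
      with hdomSetdef
    set xi : Ordinal → Ordinal := fun δ => sInf {ξ | ξ < δ ∧ δ ∈ S (gg ξ)} with hxidef
    have hxi : ∀ δ ∈ domSet, xi δ < δ ∧ δ ∈ S (gg (xi δ)) := by
      intro δ hδ
      obtain ⟨ξ, hξ, hm⟩ := hδ.2.2
      exact csInf_mem (s := {ξ | ξ < δ ∧ δ ∈ S (gg ξ)}) ⟨ξ, hξ, hm⟩
    have hxile : ∀ δ ξ, ξ < δ → δ ∈ S (gg ξ) → xi δ ≤ ξ :=
      fun δ ξ h1 h2 => csInf_le' ⟨h1, h2⟩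
    have hdomeq : ∀ ξ : Ordinal, (χ (gg ξ)).dom = S (gg ξ) :=
      fun ξ => (hA3 (gg ξ) (hgg1 ξ).1).1
    have hmem_dom : ∀ δ ∈ domSet, δ ∈ (χ (gg (xi δ))).dom := by
      intro δ hδ
      rw [hdomeq]
      exact (hxi δ hδ).2
    -- build the ladder
    obtain ⟨μ0, hμ0dom, hμ0lad⟩ : ∃ μ0 : Ladder, μ0.dom = domSet ∧
        ∀ δ ∈ domSet, μ0.lad δ = (χ (gg (xi δ))).lad δ := by
      refine ⟨⟨domSet,
        fun δ n => if h : δ ∈ domSet then (χ (gg (xi δ))).toFun δ n else n,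
        fun δ h => h.1, ?_, ?_, ?_⟩, rfl, ?_⟩
      · intro δ h
        simp only [dif_pos h]
        exact (χ (gg (xi δ))).mono δ (hmem_dom δ h)
      · intro δ h n
        simp only [dif_pos h]
        exact (χ (gg (xi δ))).lt δ (hmem_dom δ h) n
      · intro δ h a ha
        obtain ⟨n, hn⟩ := (χ (gg (xi δ))).cofinal δ (hmem_dom δ h) a ha
        exact ⟨n, by simp only [dif_pos h]; exact hn⟩
      · intro δ h
        unfold Ladder.lad
        simp only [dif_pos h]
    refine ⟨μ0, ?_, ?_, ?_⟩
    · rw [hμ0dom]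
      exact fun δ hδ => hδ.2.1
    · -- strongly guessing
      intro C hC
      have hsgi : ∀ ξ : Ordinal, ∃ D, IsClubOmegaOne D ∧
          ∀ δ ∈ D ∩ (χ (gg ξ)).dom, AlmostSubset ((χ (gg ξ)).lad δ) C :=
        fun ξ => (hA3 (gg ξ) (hgg1 ξ).1).2.2.1 C hC
      choose D hDclub hDprop using hsgi
      refine ⟨{δ | δ ∈ omegaOneSet ∧ 0 < δ ∧ ∀ ξ < δ, δ ∈ D ξ},
        isClub_diagInter D (fun ξ _ => hDclub ξ), ?_⟩
      intro δ hδ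
      have hδdom : δ ∈ domSet := by rw [← hμ0dom]; exact hδ.2
      have hx := hxi δ hδdom
      have hδD : δ ∈ D (xi δ) := hδ.1.2.2 (xi δ) hx.1
      rw [AlmostSubset, hμ0lad δ hδdom]
      exact hDprop (xi δ) δ ⟨hδD, hmem_dom δ hδdom⟩
    · -- maximality
      intro ρ hρX hρad
      obtain ⟨C₀, hC₀, hC₀p⟩ := hρad
      -- bad sets and their clubs
      have hBad : ∀ ξ, ξ < omegaOne →
          ¬ Stationary {δ | ∃ ζ < ξ, δ ∈ {δ | gg ζ ≠ gg ξ ∧ δ ∈ S (gg ζ) ∩ S (gg ξ)}} := by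
        intro ξ hξ
        apply not_stationary_iUnion_lt hξ
        intro ζ _
        by_cases hne : gg ζ = gg ξ
        · apply not_stationary_bounded omegaOne_pos
          intro δ hδ
          exact absurd hne hδ.1
        · apply not_stationary_mono (fun δ hδ => hδ.2)
          exact hSd (gg ζ) (hgg1 ζ).1 (gg ξ) (hgg1 ξ).1 hne
      have hGex : ∀ ξ, ∃ G, IsClubOmegaOne G ∧ (ξ < omegaOne →
          {δ | ∃ ζ < ξ, δ ∈ {δ | gg ζ ≠ gg ξ ∧ δ ∈ S (gg ζ) ∩ S (gg ξ)}} ∩ G = ∅) := by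
        intro ξ
        by_cases hξ : ξ < omegaOne
        · obtain ⟨G, hG, hGe⟩ := not_stationary_iff.mp (hBad ξ hξ)
          exact ⟨G, hG, fun _ => hGe⟩
        · exact ⟨omegaOneSet, isClub_omegaOneSet, fun h => absurd h hξ⟩
      choose G hGclub hGprop using hGex
      -- key: on G ξ beyond ξ, the ladder μ0 agrees with χ (gg ξ)
      have hkey : ∀ ξ, ξ < omegaOne → ∀ δ, δ ∈ G ξ → ξ < δ → δ ∈ S (gg ξ) → δ ∈ X →
          δ < omegaOne → δ ∈ domSet ∧ χ (gg (xi δ)) = χ (gg ξ) := by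
        intro ξ hξ δ hδG hξδ hδS hδX hδΩ
        have hδdom : δ ∈ domSet := ⟨hδΩ, hδX, ξ, hξδ, hδS⟩
        refine ⟨hδdom, ?_⟩
        have hxle : xi δ ≤ ξ := hxile δ ξ hξδ hδS
        by_cases heq : gg (xi δ) = gg ξ
        · rw [heq]
        · exfalso
          have hlt : xi δ < ξ := lt_of_le_of_ne hxle (fun h => heq (by rw [h]))
          have : δ ∈ {δ | ∃ ζ < ξ, δ ∈ {δ | gg ζ ≠ gg ξ ∧ δ ∈ S (gg ζ) ∩ S (gg ξ)}} ∩ G ξ :=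
            ⟨⟨xi δ, hlt, heq, (hxi δ hδdom).2, hδS⟩, hδG⟩
          rw [hGprop ξ hξ] at this
          exact this
      -- each restriction to S (gg ξ) is avoidable
      have hav : ∀ ξ, ξ < omegaOne → Avoidable (ρ.restrict (S (gg ξ))) := by
        intro ξ hξ
        apply (hA3 (gg ξ) (hgg1 ξ).1).2.2.2 (ρ.restrict (S (gg ξ)))
        · exact fun δ hδ => hδ.2
        · refine ⟨C₀ ∩ (G ξ ∩ {b | ξ < b ∧ b < omegaOne}),
            hC₀.inter ((hGclub ξ).inter (isClub_Ioi hξ)), ?_⟩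
          intro δ hδ
          obtain ⟨⟨hδC₀, hδG, hδgt, hδΩ⟩, hδρ, hδχ⟩ := hδ
          have hδS : δ ∈ S (gg ξ) := by rw [← hdomeq]; exact hδχ
          obtain ⟨hδdom, hχeq⟩ := hkey ξ hξ δ hδG hδgt hδS (hρX hδρ.1) hδΩ
          have : (ρ.restrict (S (gg ξ))).lad δ ∩ (χ (gg ξ)).lad δ = ρ.lad δ ∩ μ0.lad δ := by
            rw [hμ0lad δ hδdom, hχeq]
            rfl
          rw [this]
          exact hC₀p δ ⟨hδC₀, hδρ.1, by rw [hμ0dom]; exact hδdom⟩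
      have hACex : ∀ ξ, ∃ (AC : Set Ordinal × Set Ordinal × Set Ordinal),
          IsClubOmegaOne AC.1 ∧ IsClubOmegaOne AC.2.2 ∧ (ξ < omegaOne →
            (AC.2.1 ∩ AC.2.2 = ∅ ∧
             ∀ δ ∈ ρ.dom ∩ S (gg ξ), δ ∉ AC.2.1 → (ρ.lad δ ∩ AC.1).Finite)) := by
        intro ξ
        by_cases hξ : ξ < omegaOne
        · obtain ⟨A, ⟨hAclub, N, hNns, hNp⟩⟩ := hav ξ hξ
          obtain ⟨M, hMclub, hNM⟩ := not_stationary_iff.mp hNns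
          refine ⟨⟨A, N, M⟩, hAclub, hMclub, fun _ => ⟨hNM, ?_⟩⟩
          intro δ hδ hδN
          exact hNp δ hδ hδN
        · exact ⟨⟨omegaOneSet, ∅, omegaOneSet⟩, isClub_omegaOneSet, isClub_omegaOneSet,
            fun h => absurd h hξ⟩
      choose AC hAclub hMclub hACprop using hACex
      -- the leftover part
      have hRav : Avoidable (ρ.restrict {δ | δ ∉ domSet}) := by
        apply hA4 {δ | δ ∈ ρ.dom ∧ δ ∉ domSet} (fun δ hδ => hX (hρX hδ.1)) ?_
          (ρ.restrict {δ | δ ∉ domSet}) (fun δ hδ => ⟨hδ.1, hδ.2⟩)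
        intro i hi
        by_cases hstat : Stationary (X ∩ S i)
        · obtain ⟨ξ₀, hξ₀, hggξ₀⟩ := hgg2 i hi hstat
          apply not_stationary_bounded hξ₀
          rintro δ ⟨⟨hδρ, hδd⟩, hδS⟩
          by_contra hcon
          push_neg at hcon
          apply hδd
          refine ⟨hX (hρX hδρ) , hρX hδρ, ξ₀, hcon, ?_⟩
          rw [hggξ₀]
          exact hδS
        · refine not_stationary_mono ?_ hstat
          rintro δ ⟨⟨hδρ, _⟩, hδS⟩
          exact ⟨hρX hδρ, hδS⟩
      obtain ⟨Ainf, ⟨hAinfclub, Ninf, hNinfns, hNinfp⟩⟩ := hRav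
      obtain ⟨Minf, hMinfclub, hNMinf⟩ := not_stationary_iff.mp hNinfns
      -- final avoiding club
      set Ddiag := {δ | δ ∈ omegaOneSet ∧ 0 < δ ∧ ∀ ξ < δ, δ ∈ (AC ξ).1 ∩ (AC ξ).2.2}
        with hDdiagdef
      have hDdiagclub : IsClubOmegaOne Ddiag :=
        isClub_diagInter _ (fun ξ _ => (hAclub ξ).inter (hMclub ξ))
      refine ⟨Ddiag ∩ Ainf, hDdiagclub.inter hAinfclub,
        (omegaOneSet \ Ddiag) ∪ Ninf, ?_, ?_⟩
      · rw [not_stationary_iff]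
        refine ⟨Ddiag ∩ Minf, hDdiagclub.inter hMinfclub, ?_⟩
        ext δ
        simp only [Set.mem_inter_iff, Set.mem_union, Set.mem_diff,
          Set.mem_empty_iff_false, iff_false]
        rintro ⟨h1 | h1, h2, h3⟩
        · exact h1.2 h2
        · have : δ ∈ Ninf ∩ Minf := ⟨h1, h3⟩
          rw [hNMinf] at this
          exact this
      · intro δ hδdom hδN
        have hδΩ : δ < omegaOne := ρ.dom_lt δ hδdom
        have hδDdiag : δ ∈ Ddiag := by
          by_contra h
          exact hδN (Or.inl ⟨hδΩ, h⟩)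
        have hδNinf : δ ∉ Ninf := fun h => hδN (Or.inr h)
        by_cases hd : δ ∈ domSet
        · have hx := hxi δ hd
          have hxiΩ : xi δ < omegaOne := lt_trans hx.1 hδΩ
          have hδAM : δ ∈ (AC (xi δ)).1 ∩ (AC (xi δ)).2.2 := hδDdiag.2.2 (xi δ) hx.1
          have hδnotN : δ ∉ (AC (xi δ)).2.1 := by
            intro h
            have : δ ∈ (AC (xi δ)).2.1 ∩ (AC (xi δ)).2.2 := ⟨h, hδAM.2⟩
            rw [(hACprop (xi δ) hxiΩ).1] at this
            exact this
          have hfin : (ρ.lad δ ∩ (AC (xi δ)).1).Finite :=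
            (hACprop (xi δ) hxiΩ).2 δ ⟨hδdom, hx.2⟩ hδnotN
          have hbdd := ρ.lad_bounded_finite hδdom hx.1
          apply (hfin.union hbdd).subset
          rintro α ⟨hαρ, hαD, _⟩
          by_cases hαgt : xi δ < α
          · exact Or.inl ⟨hαρ, (hαD.2.2 (xi δ) hαgt).1⟩
          · exact Or.inr ⟨hαρ, not_lt.mp hαgt⟩
        · have hfin : ((ρ.restrict {δ | δ ∉ domSet}).lad δ ∩ Ainf).Finite :=
            hNinfp δ ⟨hδdom, hd⟩ hδNinf
          apply hfin.subset
          rintro α ⟨hαρ, _, hαA⟩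
          exact ⟨hαρ, hαA⟩

/-- Lemma 2.1(5): under A1–A5, I₁ = I(S̄): X admits a maximal ladder iff X is
S̄-small. -/
theorem stmt15 (S : Ordinal → Set Ordinal) (η : Ladder) (χ : Ordinal → Ladder)
    (hA : CondA S η χ) (X : Set Ordinal) (hX : X ⊆ omegaOneSet) :
    (∃ μ : Ladder, MaximalLadderFor μ X) ↔ SSmall S X := by
  constructor
  · rintro ⟨μ, hμ⟩
    exact forward_dir S η χ hA X hX μ hμ
  · intro hsm
    exact backward_dir S η χ hA X hX hsm
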